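/- arXiv:1306.3776 — 3 statements merged into one kernel-verified Lean document; each statement's English description precedes it below -/
import Mathlib

section
/- Let b, s be as above (β₀ = 0, βₙ ≠ 0 for n ≥ 1) and let p be an orthogonal projection on ℓ²(ℕ) commuting with s*b and with bs. Then p commutes with every coordinate projection pₙ = |eₙ⟩⟨eₙ|; i.e., p is a diagonal operator. -/
/-! `T = b s` is a weighted shift, `T eₙ = βₙ₊₁ eₙ₊₁`, and `T (s* b)` is the diagonal operator
with entries `βₙ²`; as `β₀ = 0` and `βₙ ≠ 0` otherwise, its kernel is spanned by `e₀`. Since `p`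
commutes with `T (s* b)`, it maps `e₀` to some `c e₀`, and commuting with the shift `T` (whose
weights are nonzero) propagates this to `p eₙ = c eₙ` for all `n`. Hence `p = c • 1` is a scalar,
and commutes with every operator. -/

noncomputable section
open ContinuousLinearMap

abbrev H : Type := lp (fun _ : ℕ => ℂ) 2

def e (n : ℕ) : H := lp.single 2 n 1

lemma e_apply (n m : ℕ) : e n m = if m = n then 1 else 0 := by
  simp [e, lp.single_apply, Pi.single_apply]

lemma inner_e_left (n : ℕ) (x : H) : inner ℂ (e n) x = x n := by
  simp [e, lp.inner_single_left]

theorem ContinuousLinearMap.ext_e {F : Type*} [AddCommMonoid F] [Module ℂ F] [TopologicalSpace F]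
    [T2Space F] {f g : H →L[ℂ] F} (h : ∀ n, f (e n) = g (e n)) : f = g := by
  refine lp.ext_continuousLinearMap (by norm_num) fun n => ContinuousLinearMap.ext fun a => ?_
  have : lp.single 2 n a = a • e n := by rw [e, ← lp.single_smul, smul_eq_mul, mul_one]
  simp [this, h]

lemma apply_apply_of_apply_e_eq_smul {A : H →L[ℂ] H} {d : ℕ → ℂ}
    (hA : ∀ n, A (e n) = d n • e n) (x : H) (n : ℕ) : A x n = d n * x n := by
  have : lp.evalCLM ℂ _ 2 n ∘L A = d n • lp.evalCLM ℂ (fun _ : ℕ => ℂ) 2 n := by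
    refine ext_e fun m => ?_
    by_cases h : n = m
    · simp [lp.evalCLM, hA, h]
    · simp [lp.evalCLM, hA, e_apply, h]
  simpa [lp.evalCLM] using DFunLike.congr_fun this x

lemma adjoint_apply_e_succ {s : H →L[ℂ] H} (hs : ∀ n, s (e n) = e (n + 1)) (m : ℕ) :
    adjoint s (e (m + 1)) = e m := by
  ext n
  rw [← inner_e_left, adjoint_inner_right, hs, inner_e_left, e_apply, e_apply]
  simp

lemma eq_smul_e_zero_of_apply_eq_zero {A : H →L[ℂ] H} {d : ℕ → ℂ}
    (hA : ∀ n, A (e n) = d n • e n) (hd : ∀ n, 1 ≤ n → d n ≠ 0) {x : H} (hx : A x = 0) :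
    x = x 0 • e 0 := by
  ext m
  rcases m with _ | m
  · simp [e_apply]
  · have := apply_apply_of_apply_e_eq_smul hA x (m + 1)
    rw [hx] at this
    simp [e_apply, (mul_eq_zero.mp this.symm).resolve_left (hd _ m.succ_pos)]

lemma eq_smul_one_of_commute_weightedShift {T p : H →L[ℂ] H} {w : ℕ → ℂ} {c : ℂ}
    (hT : ∀ n, T (e n) = w n • e (n + 1)) (hw : ∀ n, w n ≠ 0) (hpT : Commute p T)
    (h0 : p (e 0) = c • e 0) : p = c • 1 := by
  suffices hp : ∀ n, p (e n) = c • e n from ext_e fun n => by simp [hp]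
  intro n
  induction n with
  | zero => exact h0
  | succ n ih =>
    refine smul_right_injective H (hw n) ?_
    calc w n • p (e (n + 1)) = p (T (e n)) := by rw [hT, map_smul]
      _ = T (p (e n)) := DFunLike.congr_fun hpT (e n)
      _ = w n • c • e (n + 1) := by rw [ih, map_smul, hT, smul_comm]

theorem commuting_projection_is_diagonal_general (β : ℕ → ℝ) (hβ0 : β 0 = 0)
    (hβ : ∀ n, 1 ≤ n → β n ≠ 0)
    (s b : H →L[ℂ] H)
    (hs : ∀ n, s (e n) = e (n + 1))
    (hb : ∀ n, b (e n) = (β n : ℂ) • e n)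
    (p : H →L[ℂ] H)
    (hc1 : p ∘L (adjoint s ∘L b) = (adjoint s ∘L b) ∘L p)
    (hc2 : p ∘L (b ∘L s) = (b ∘L s) ∘L p)
    (q : ℕ → (H →L[ℂ] H)) :
    ∀ k, p ∘L q k = q k ∘L p := by
  have hT : ∀ n, (b ∘L s) (e n) = (β (n + 1) : ℂ) • e (n + 1) := by simp [hs, hb]
  have hTW : ∀ n, ((b ∘L s) ∘L (adjoint s ∘L b)) (e n) = (β n : ℂ) ^ 2 • e n := by
    rintro (_ | n)
    · simp [hb, hβ0]
    · simp only [comp_apply, hb, map_smul, adjoint_apply_e_succ hs, hs, smul_smul, sq]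
  have hpT : Commute p (b ∘L s) := hc2
  have hpW : Commute p (adjoint s ∘L b) := hc1
  have hpTW : Commute p ((b ∘L s) ∘L (adjoint s ∘L b)) := hpT.mul_right hpW
  have h0 : p (e 0) = p (e 0) 0 • e 0 := by
    refine eq_smul_e_zero_of_apply_eq_zero hTW (fun n hn => by simpa using hβ n hn) ?_
    calc _ = p (((b ∘L s) ∘L (adjoint s ∘L b)) (e 0)) := (DFunLike.congr_fun hpTW (e 0)).symm
      _ = 0 := by simp [hTW, hβ0]
  have hp : p = p (e 0) 0 • 1 :=
    eq_smul_one_of_commute_weightedShift hT (fun n => by simpa using hβ _ n.succ_pos) hpT h0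
  intro k
  rw [hp]
  ext x
  simp

/-- an orthogonal projection p on ℓ²(ℕ) commuting with s*b and with bs
commutes with every coordinate projection pₙ = |eₙ⟩⟨eₙ|, i.e. p is diagonal. -/
theorem commuting_projection_is_diagonal (β : ℕ → ℝ) (hβ0 : β 0 = 0)
    (hβ : ∀ n, 1 ≤ n → β n ≠ 0)
    (s b : H →L[ℂ] H)
    (hs : ∀ n, s (e n) = e (n + 1))
    (hb : ∀ n, b (e n) = (β n : ℂ) • e n)
    (p : H →L[ℂ] H) (hsa : IsSelfAdjoint p) (hidem : p ∘L p = p)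
    (hc1 : p ∘L (adjoint s ∘L b) = (adjoint s ∘L b) ∘L p)
    (hc2 : p ∘L (b ∘L s) = (b ∘L s) ∘L p)
    (q : ℕ → (H →L[ℂ] H))
    (hq : ∀ k n, q k (e n) = if k = n then e n else 0) :
    ∀ k, p ∘L q k = q k ∘L p :=
  commuting_projection_is_diagonal_general β hβ0 hβ s b hs hb p hc1 hc2 q
end
end

section
/- Let ψ be a diagonal state on M₂ with parameter λ ≥ 1/2 (ζ = 0). Then the transition operator T_ψ admits no invariant normal state: there is no positive trace-class operator ρ with trace 1 on ℓ²(ℕ) such that Tr(ρ T_ψ(x)) = Tr(ρ x) for all bounded x. -/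
/-!
Testing invariance on the projections `|eₘ⟩⟨eₘ|` shows that the diagonal `pₘ = ρₘₘ` of the
density operator satisfies the balance equation
`λ (αₘ₊₁² pₘ + βₘ² pₘ₋₁) + (1 - λ) (βₘ₊₁² pₘ₊₁ + αₘ² pₘ) = pₘ`.
Because `αₙ² + βₙ² = 1` this says that the flux `βₘ₊₁² ((1 - λ) pₘ₊₁ - λ pₘ)` does not depend
on `m`, and `β₀ = 0` makes it vanish, so `(1 - λ) pₘ₊₁ = λ pₘ`. For `λ ≥ 1/2` the sequence `p` is
then nondecreasing; being summable it is zero, contradicting `∑ pₘ = Tr ρ = 1`.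
-/

noncomputable section
open ContinuousLinearMap

open InnerProductSpace ComplexConjugate

lemma inner_e_left_s11 (k : ℕ) (v : H) : ⟪e k, v⟫_ℂ = v k := by
  simp [e, lp.inner_single_left]

lemma inner_e_e (j k : ℕ) : ⟪e j, e k⟫_ℂ = if k = j then 1 else 0 := by
  rw [inner_e_left_s11, e, lp.single_apply, Pi.single_apply]
  exact if_congr eq_comm rfl rfl

lemma ext_inner_e {v w : H} (h : ∀ k, ⟪e k, v⟫_ℂ = ⟪e k, w⟫_ℂ) : v = w :=
  lp.ext <| funext fun k => by simpa only [inner_e_left_s11] using h k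

lemma hasSum_norm_inner_e_sq (v : H) :
    HasSum (fun k => ‖⟪e k, v⟫_ℂ‖ ^ 2) (‖v‖ ^ 2) := by
  simpa [inner_e_left_s11] using lp.hasSum_norm (p := 2) (by norm_num) v

section Diagonal

variable {d : H →L[ℂ] H}

lemma adjoint_apply_e_of_diagonal {c : ℕ → ℂ} (hd : ∀ n, d (e n) = c n • e n) (k : ℕ) :
    adjoint d (e k) = conj (c k) • e k :=
  ext_inner_e fun j => by
    rw [adjoint_inner_right, hd, inner_smul_left, inner_smul_right, inner_e_e]
    split_ifs with h <;> simp [h]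

lemma inner_e_apply_of_diagonal {c : ℕ → ℂ} (hd : ∀ n, d (e n) = c n • e n) (k : ℕ) (v : H) :
    ⟪e k, d v⟫_ℂ = c k * ⟪e k, v⟫_ℂ := by
  rw [← adjoint_inner_left, adjoint_apply_e_of_diagonal hd, inner_smul_left, Complex.conj_conj]

lemma adjoint_eq_self_of_diagonal {c : ℕ → ℝ} (hd : ∀ n, d (e n) = (c n : ℂ) • e n) :
    adjoint d = d :=
  ext fun v => ext_inner_e fun k => by
    rw [adjoint_inner_right, hd, inner_smul_left, inner_e_apply_of_diagonal hd, Complex.conj_ofReal]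

end Diagonal

section Shift

variable {s : H →L[ℂ] H} (hs : ∀ n, s (e n) = e (n + 1))
include hs

lemma adjoint_apply_e_succ_of_shift (k : ℕ) : adjoint s (e (k + 1)) = e k :=
  ext_inner_e fun j => by simp [adjoint_inner_right, hs, inner_e_e]

lemma inner_e_succ_apply_of_shift (k : ℕ) (v : H) : ⟪e (k + 1), s v⟫_ℂ = ⟪e k, v⟫_ℂ := by
  rw [← adjoint_inner_left, adjoint_apply_e_succ_of_shift hs]

lemma inner_e_adjoint_apply_of_shift (k : ℕ) (v : H) :
    ⟪e k, adjoint s v⟫_ℂ = ⟪e (k + 1), v⟫_ℂ := by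
  rw [adjoint_inner_right, hs]

end Shift

lemma inner_rankOne_self_apply {E : Type*} [NormedAddCommGroup E] [InnerProductSpace ℂ E]
    (u w : E) : ⟪w, rankOne ℂ u u w⟫_ℂ = ((‖⟪u, w⟫_ℂ‖ ^ 2 : ℝ) : ℂ) := by
  rw [inner_right_rankOne_apply, ← inner_conj_symm, Complex.conj_mul', Complex.ofReal_pow]

/-- The normal state with density operator `ρ = ∑ₙ |ξₙ⟩⟨ξₙ|`. -/
def normalState (ξ : ℕ → H) (x : H →L[ℂ] H) : ℂ := ∑' n, ⟪ξ n, x (ξ n)⟫_ℂ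

/-- The diagonal entry `ρₖₖ` of `ρ = ∑ₙ |ξₙ⟩⟨ξₙ|`. -/
def densityDiag (ξ : ℕ → H) (k : ℕ) : ℝ := ∑' n, ‖⟪e k, ξ n⟫_ℂ‖ ^ 2

section NormalState

variable {ξ : ℕ → H}

lemma densityDiag_nonneg (k : ℕ) : 0 ≤ densityDiag ξ k :=
  tsum_nonneg fun _ => sq_nonneg _

lemma hasSum_densityDiag (hξ : Summable fun n => ‖ξ n‖ ^ 2) :
    HasSum (densityDiag ξ) (∑' n, ‖ξ n‖ ^ 2) := by
  have hq : Summable (Function.uncurry fun n k => ‖⟪e k, ξ n⟫_ℂ‖ ^ 2) :=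
    (summable_prod_of_nonneg fun _ => sq_nonneg _).mpr
    ⟨fun n => (hasSum_norm_inner_e_sq (ξ n)).summable,
      by simpa only [(hasSum_norm_inner_e_sq _).tsum_eq] using hξ⟩
  have hsum : ∑' k, densityDiag ξ k = ∑' n, ‖ξ n‖ ^ 2 := by
    simp only [densityDiag, ← (hasSum_norm_inner_e_sq _).tsum_eq]
    exact hq.tsum_comm
  exact hsum ▸ hq.prod_symm.prod.hasSum

lemma summable_inner_apply (hξ : Summable fun n => ‖ξ n‖ ^ 2) (x : H →L[ℂ] H) :
    Summable fun n => ⟪ξ n, x (ξ n)⟫_ℂ :=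
  .of_norm_bounded (hξ.mul_left ‖x‖) fun n => by
    calc ‖⟪ξ n, x (ξ n)⟫_ℂ‖ ≤ ‖ξ n‖ * (‖x‖ * ‖ξ n‖) :=
          (norm_inner_le_norm _ _).trans (by gcongr; exact x.le_opNorm _)
      _ = ‖x‖ * ‖ξ n‖ ^ 2 := by ring

lemma normalState_add (hξ : Summable fun n => ‖ξ n‖ ^ 2) (x y : H →L[ℂ] H) :
    normalState ξ (x + y) = normalState ξ x + normalState ξ y := by
  simp only [normalState, add_apply, inner_add_right]
  exact (summable_inner_apply hξ x).tsum_add (summable_inner_apply hξ y)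

lemma normalState_smul (c : ℂ) (x : H →L[ℂ] H) :
    normalState ξ (c • x) = c * normalState ξ x := by
  simp only [normalState, smul_apply, inner_smul_right, tsum_mul_left]

lemma normalState_rankOne_e (m : ℕ) :
    normalState ξ (rankOne ℂ (e m) (e m)) = densityDiag ξ m := by
  simp only [normalState, densityDiag, inner_rankOne_self_apply, Complex.ofReal_tsum]

lemma normalState_comp_rankOne_e_comp {X Y : H →L[ℂ] H} (hXY : adjoint X = Y) {m j : ℕ} {c : ℝ}
    (hY : ∀ v, ⟪e m, Y v⟫_ℂ = c * ⟪e j, v⟫_ℂ) :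
    normalState ξ (X ∘L rankOne ℂ (e m) (e m) ∘L Y) = ((c ^ 2 * densityDiag ξ j : ℝ) : ℂ) := by
  have hpt : ∀ n, ⟪ξ n, (X ∘L rankOne ℂ (e m) (e m) ∘L Y) (ξ n)⟫_ℂ
      = ((c ^ 2 * ‖⟪e j, ξ n⟫_ℂ‖ ^ 2 : ℝ) : ℂ) := fun n => by
    rw [comp_apply, ← adjoint_inner_left, hXY, comp_apply, inner_rankOne_self_apply, hY,
      norm_mul, Complex.norm_real, mul_pow, Real.norm_eq_abs, sq_abs]
  simp only [normalState, hpt, densityDiag, ← tsum_mul_left, Complex.ofReal_tsum]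

end NormalState

def transition (s a b : H →L[ℂ] H) (l : ℝ) (x : H →L[ℂ] H) : H →L[ℂ] H :=
  (l : ℂ) • ((adjoint s ∘L a ∘L s) ∘L x ∘L (adjoint s ∘L a ∘L s)
      + (adjoint s ∘L b) ∘L x ∘L (b ∘L s))
    + ((1 - l : ℝ) : ℂ) • ((b ∘L s) ∘L x ∘L (adjoint s ∘L b) + a ∘L x ∘L a)

-- `densityDiag ξ (m - 1)` is a junk value at `m = 0`, where it comes multiplied by `β 0 ^ 2 = 0`.
lemma densityDiag_balance {α β : ℕ → ℝ} {s a b : H →L[ℂ] H} {l : ℝ} {ξ : ℕ → H}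
    (hs : ∀ n, s (e n) = e (n + 1)) (ha : ∀ n, a (e n) = (α n : ℂ) • e n)
    (hb : ∀ n, b (e n) = (β n : ℂ) • e n) (hβ0 : β 0 = 0) (hξ : Summable fun n => ‖ξ n‖ ^ 2)
    (m : ℕ) (hinv : normalState ξ (transition s a b l (rankOne ℂ (e m) (e m)))
      = normalState ξ (rankOne ℂ (e m) (e m))) :
    l * (α (m + 1) ^ 2 * densityDiag ξ m + β m ^ 2 * densityDiag ξ (m - 1))
      + (1 - l) * (β (m + 1) ^ 2 * densityDiag ξ (m + 1) + α m ^ 2 * densityDiag ξ m)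
      = densityDiag ξ m := by
  have ha' := adjoint_eq_self_of_diagonal ha
  have hb' := adjoint_eq_self_of_diagonal hb
  have hsas : ∀ v, ⟪e m, (adjoint s ∘L a ∘L s) v⟫_ℂ = α (m + 1) * ⟪e m, v⟫_ℂ :=
    fun v => by
      rw [comp_apply, comp_apply, inner_e_adjoint_apply_of_shift hs, inner_e_apply_of_diagonal ha,
        inner_e_succ_apply_of_shift hs]
  have hbs : ∀ v, ⟪e m, (b ∘L s) v⟫_ℂ = β m * ⟪e (m - 1), v⟫_ℂ := fun v => by
    rw [comp_apply, inner_e_apply_of_diagonal hb]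
    cases m with
    | zero => simp [hβ0]
    | succ k => rw [inner_e_succ_apply_of_shift hs, Nat.add_sub_cancel]
  have hsb : ∀ v, ⟪e m, (adjoint s ∘L b) v⟫_ℂ = β (m + 1) * ⟪e (m + 1), v⟫_ℂ :=
    fun v => by rw [comp_apply, inner_e_adjoint_apply_of_shift hs, inner_e_apply_of_diagonal hb]
  rw [transition, normalState_add hξ, normalState_smul, normalState_smul, normalState_add hξ,
    normalState_add hξ,
    normalState_comp_rankOne_e_comp
      (by rw [adjoint_comp, adjoint_comp, ha', adjoint_adjoint, comp_assoc]) hsas,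
    normalState_comp_rankOne_e_comp (by rw [adjoint_comp, adjoint_adjoint, hb']) hbs,
    normalState_comp_rankOne_e_comp (by rw [adjoint_comp, hb']) hsb,
    normalState_comp_rankOne_e_comp ha' (inner_e_apply_of_diagonal ha m),
    normalState_rankOne_e] at hinv
  exact_mod_cast hinv

lemma detailed_balance {p α β : ℕ → ℝ} {l : ℝ} (hαβ : ∀ n, α n ^ 2 + β n ^ 2 = 1)
    (hβ0 : β 0 = 0) (hβ : ∀ n, 1 ≤ n → β n ≠ 0)
    (hbal : ∀ m, l * (α (m + 1) ^ 2 * p m + β m ^ 2 * p (m - 1))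
      + (1 - l) * (β (m + 1) ^ 2 * p (m + 1) + α m ^ 2 * p m) = p m)
    (m : ℕ) : (1 - l) * p (m + 1) = l * p m := by
  have hstep : ∀ m, β (m + 1) ^ 2 * ((1 - l) * p (m + 1) - l * p m)
      = β m ^ 2 * ((1 - l) * p m - l * p (m - 1)) := fun m => by
    linear_combination hbal m - l * p m * hαβ (m + 1) - (1 - l) * p m * hαβ m
  have hflux : ∀ m, β (m + 1) ^ 2 * ((1 - l) * p (m + 1) - l * p m) = 0 := fun m => by
    induction m with
    | zero => simpa [hβ0] using hstep 0
    | succ k ih => rw [hstep, Nat.add_sub_cancel, ih]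
  have hβm : β (m + 1) ^ 2 ≠ 0 := pow_ne_zero 2 (hβ (m + 1) m.succ_pos)
  exact sub_eq_zero.mp ((mul_eq_zero.mp (hflux m)).resolve_left hβm)

lemma monotone_of_detailed_balance {p : ℕ → ℝ} {l : ℝ} (hl : 1 / 2 ≤ l) (hp : ∀ k, 0 ≤ p k)
    (hdb : ∀ m, (1 - l) * p (m + 1) = l * p m) : Monotone p :=
  monotone_nat_of_le_succ fun m =>
    le_of_mul_le_mul_left (a := l) (by nlinarith [hdb m, hp (m + 1)]) (by linarith)

theorem no_invariant_normal_state_general (α β : ℕ → ℝ) (hβ0 : β 0 = 0)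
    (hαβ : ∀ n, α n ^ 2 + β n ^ 2 = 1) (hβ : ∀ n, 1 ≤ n → β n ≠ 0)
    (s a b : H →L[ℂ] H)
    (hs : ∀ n, s (e n) = e (n + 1))
    (ha : ∀ n, a (e n) = (α n : ℂ) • e n)
    (hb : ∀ n, b (e n) = (β n : ℂ) • e n)
    (l : ℝ) (hl0 : 1 / 2 ≤ l) :
    ¬ ∃ ξ : ℕ → H, (∑' n, ‖ξ n‖ ^ 2) = 1 ∧
      ∀ x : H →L[ℂ] H,
        (∑' n, (inner ℂ (ξ n)
          (((l : ℂ) • ((adjoint s ∘L a ∘L s) ∘L x ∘L (adjoint s ∘L a ∘L s)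
              + (adjoint s ∘L b) ∘L x ∘L (b ∘L s))
            + ((1 - l : ℝ) : ℂ) • ((b ∘L s) ∘L x ∘L (adjoint s ∘L b) + a ∘L x ∘L a))
            (ξ n)) : ℂ))
        = ∑' n, (inner ℂ (ξ n) (x (ξ n)) : ℂ) := by
  rintro ⟨ξ, hsum, hinv⟩
  have hξ : Summable fun n => ‖ξ n‖ ^ 2 := by
    by_contra h
    exact zero_ne_one ((tsum_eq_zero_of_not_summable h).symm.trans hsum)
  have hρ := hasSum_densityDiag hξ
  have hdb := detailed_balance hαβ hβ0 hβ fun m => densityDiag_balance hs ha hb hβ0 hξ m (hinv _)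
  have hmono := monotone_of_detailed_balance hl0 densityDiag_nonneg hdb
  have hzero : densityDiag ξ = 0 := funext fun k =>
    le_antisymm (hmono.ge_of_tendsto hρ.summable.tendsto_atTop_zero k) (densityDiag_nonneg k)
  rw [hzero, hsum] at hρ
  exact one_ne_zero (hρ.unique hasSum_zero)

/-- for a diagonal state ψ with λ ≥ 1/2 the transition operator
T_ψ(x) = λ(s*as x s*as + s*b x bs) + (1−λ)(bs x s*b + a x a) admits no invariant normal
state.  A normal state on B(ℓ²(ℕ)) is represented (via the spectral decomposition of its
density operator) as x ↦ Σₙ ⟨ξₙ, x ξₙ⟩ with Σₙ ‖ξₙ‖² = 1. -/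
theorem no_invariant_normal_state (α β : ℕ → ℝ) (hα0 : α 0 = 1) (hβ0 : β 0 = 0)
    (hαβ : ∀ n, α n ^ 2 + β n ^ 2 = 1) (hβ : ∀ n, 1 ≤ n → β n ≠ 0)
    (s a b : H →L[ℂ] H)
    (hs : ∀ n, s (e n) = e (n + 1))
    (ha : ∀ n, a (e n) = (α n : ℂ) • e n)
    (hb : ∀ n, b (e n) = (β n : ℂ) • e n)
    (l : ℝ) (hl0 : 1 / 2 ≤ l) (hl1 : l ≤ 1) :
    ¬ ∃ ξ : ℕ → H, (∑' n, ‖ξ n‖ ^ 2) = 1 ∧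
      ∀ x : H →L[ℂ] H,
        (∑' n, (inner ℂ (ξ n)
          (((l : ℂ) • ((adjoint s ∘L a ∘L s) ∘L x ∘L (adjoint s ∘L a ∘L s)
              + (adjoint s ∘L b) ∘L x ∘L (b ∘L s))
            + ((1 - l : ℝ) : ℂ) • ((b ∘L s) ∘L x ∘L (adjoint s ∘L b) + a ∘L x ∘L a))
            (ξ n)) : ℂ))
        = ∑' n, (inner ℂ (ξ n) (x (ξ n)) : ℂ) :=
  no_invariant_normal_state_general α β hβ0 hαβ hβ s a b hs ha hb l hl0
end
end

section
/- Let βₙ = (1/2)ⁿ and αₙ = √(1 − βₙ²) for n ≥ 1, α₀ = 1, β₀ = 0. For ψ = ψ₊ (λ = 1), the transition operator T_{ψ₊}(x) = s*as x s*as + s*b x bs is weakly mixing: the only bounded solutions x of T_{ψ₊}(x) = μ x with |μ| = 1 are x = 0 when μ ≠ 1 and x ∈ ℂ·1 when μ = 1. -/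
noncomputable section
open ContinuousLinearMap

/-!
The coefficients `x_{m,n} = ⟪e m, x (e n)⟫` of a solution of `T_{ψ₊}(x) = μ x` obey
`β_{m+1} β_{n+1} x_{m+1,n+1} = (μ - α_{m+1} α_{n+1}) x_{m,n}`, and they are bounded by `‖x‖`.
Off the diagonal, `|μ - α_p α_q| ≥ 1 - α_p α_q ≥ (β_p² + β_q²)/2 ≥ (5/4) β_p β_q` by AM–GM and
`β_p / β_q ∉ (1/2, 2)`, so `|x_{m+j,n+j}|` grows like `(5/4)^j` and must vanish. On the diagonal
the factor is `|μ - 1 + β_p²| / β_p²`: it is at least `1`, so `|x_{m,m}|` is nondecreasing; for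
`μ ≠ 1` it tends to infinity, forcing the diagonal to vanish, and for `μ = 1` it equals `1`.
-/

open scoped InnerProductSpace ComplexConjugate

theorem eq_zero_of_norm_le_of_mul_norm_le_norm_succ {E : Type*} [NormedAddCommGroup E]
    {f : ℕ → E} {B r : ℝ} (hr : 1 < r) (hB : ∀ j, ‖f j‖ ≤ B)
    (hf : ∀ j, r * ‖f j‖ ≤ ‖f (j + 1)‖) : f 0 = 0 := by
  by_contra h0
  have hpos : 0 < ‖f 0‖ := norm_pos_iff.2 h0
  have hgeom (j : ℕ) : r ^ j * ‖f 0‖ ≤ ‖f j‖ := by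
    induction j with
    | zero => simp
    | succ j ih =>
      calc r ^ (j + 1) * ‖f 0‖ = r * (r ^ j * ‖f 0‖) := by ring
        _ ≤ r * ‖f j‖ := by gcongr
        _ ≤ ‖f (j + 1)‖ := hf j
  obtain ⟨j, hj⟩ := pow_unbounded_of_one_lt (B / ‖f 0‖) hr
  rw [div_lt_iff₀ hpos] at hj
  linarith [hgeom j, hB j]

theorem mul_norm_le_norm_of_ofReal_mul_eq {𝕜 : Type*} [RCLike 𝕜] {w r : ℝ} (hw : 0 < w)
    {z a b : 𝕜} (h : (w : 𝕜) * b = z * a) (hz : r * w ≤ ‖z‖) : r * ‖a‖ ≤ ‖b‖ := by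
  have hnorm : w * ‖b‖ = ‖z‖ * ‖a‖ := by
    simpa [norm_mul, RCLike.norm_ofReal, abs_of_pos hw] using congrArg norm h
  have : w * (r * ‖a‖) ≤ w * ‖b‖ := by
    rw [hnorm, ← mul_assoc, mul_comm w]
    gcongr
  exact le_of_mul_le_mul_left this hw

theorem one_sub_le_norm_sub_ofReal {𝕜 : Type*} [RCLike 𝕜] {μ : 𝕜} (hμ : ‖μ‖ = 1) {t : ℝ}
    (ht : 0 ≤ t) : 1 - t ≤ ‖μ - t‖ := by
  simpa [hμ, RCLike.norm_ofReal, abs_of_nonneg ht] using norm_sub_norm_le μ (t : 𝕜)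

theorem Real.sqrt_one_sub_sq_mul_sqrt_one_sub_sq_le {u w : ℝ} (hu : u ^ 2 ≤ 1) (hw : w ^ 2 ≤ 1) :
    √(1 - u ^ 2) * √(1 - w ^ 2) ≤ 1 - (u ^ 2 + w ^ 2) / 2 := by
  have := two_mul_le_add_sq √(1 - u ^ 2) √(1 - w ^ 2)
  rw [Real.sq_sqrt (by linarith), Real.sq_sqrt (by linarith)] at this
  linarith

theorem five_quarters_mul_le_of_two_mul_le {u w : ℝ} (hw : 0 ≤ w) (h : 2 * w ≤ u) :
    5 / 4 * (u * w) ≤ (u ^ 2 + w ^ 2) / 2 := by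
  nlinarith [mul_nonneg (sub_nonneg.2 h) (by linarith : 0 ≤ u - w / 2)]

theorem two_mul_half_pow_le_of_lt {p q : ℕ} (h : p < q) :
    2 * (1 / 2 : ℝ) ^ q ≤ (1 / 2) ^ p := by
  obtain ⟨k, rfl⟩ := Nat.exists_eq_add_of_lt h
  have : (1 / 2 : ℝ) ^ k ≤ 1 := pow_le_one₀ (by norm_num) (by norm_num)
  calc 2 * (1 / 2 : ℝ) ^ (p + k + 1) = (1 / 2) ^ p * (1 / 2) ^ k := by ring
    _ ≤ (1 / 2) ^ p := mul_le_of_le_one_right (by positivity) this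

theorem half_pow_sq_le_one (p : ℕ) : ((1 / 2 : ℝ) ^ p) ^ 2 ≤ 1 :=
  pow_le_one₀ (by positivity) (pow_le_one₀ (by norm_num) (by norm_num))

theorem five_quarters_mul_half_pow_le {p q : ℕ} (h : p ≠ q) :
    5 / 4 * ((1 / 2 : ℝ) ^ p * (1 / 2) ^ q)
      ≤ 1 - √(1 - ((1 / 2 : ℝ) ^ p) ^ 2) * √(1 - ((1 / 2 : ℝ) ^ q) ^ 2) := by
  wlog hpq : p < q generalizing p q
  · simpa only [mul_comm] using this h.symm (by omega)
  calc 5 / 4 * ((1 / 2 : ℝ) ^ p * (1 / 2) ^ q)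
      ≤ (((1 / 2 : ℝ) ^ p) ^ 2 + ((1 / 2) ^ q) ^ 2) / 2 :=
        five_quarters_mul_le_of_two_mul_le (by positivity) (two_mul_half_pow_le_of_lt hpq)
    _ ≤ _ := by
        linarith [Real.sqrt_one_sub_sq_mul_sqrt_one_sub_sq_le (half_pow_sq_le_one p)
          (half_pow_sq_le_one q)]

section CoeffRecursion

variable {𝕜 : Type*} [RCLike 𝕜]

def CoeffRecursion (α β : ℕ → ℝ) (μ : 𝕜) (c : ℕ → ℕ → 𝕜) : Prop :=
  ∀ m n, (β (m + 1) * β (n + 1) : 𝕜) * c (m + 1) (n + 1) = (μ - α (m + 1) * α (n + 1)) * c m n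

variable {α β : ℕ → ℝ} {μ : 𝕜} {c : ℕ → ℕ → 𝕜} {B : ℝ}

theorem CoeffRecursion.mul_norm_le_norm_succ (hc : CoeffRecursion α β μ c)
    (hβ : ∀ n, 1 ≤ n → β n = (1 / 2) ^ n) {r : ℝ} {m n : ℕ}
    (hr : r * (β (m + 1) * β (n + 1)) ≤ ‖μ - α (m + 1) * α (n + 1)‖) :
    r * ‖c m n‖ ≤ ‖c (m + 1) (n + 1)‖ := by
  refine mul_norm_le_norm_of_ofReal_mul_eq ?_ (by push_cast; exact hc m n) hr
  rw [hβ _ (by omega), hβ _ (by omega)]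
  positivity

theorem five_quarters_mul_le_norm_sub (hμ : ‖μ‖ = 1) (hβ : ∀ n, 1 ≤ n → β n = (1 / 2) ^ n)
    (hα : ∀ n, 1 ≤ n → α n = √(1 - β n ^ 2))
    {p q : ℕ} (hp : 1 ≤ p) (hq : 1 ≤ q) (hpq : p ≠ q) :
    5 / 4 * (β p * β q) ≤ ‖μ - α p * α q‖ := by
  rw [hα p hp, hα q hq, hβ p hp, hβ q hq]
  calc 5 / 4 * ((1 / 2 : ℝ) ^ p * (1 / 2) ^ q)
      ≤ 1 - √(1 - ((1 / 2 : ℝ) ^ p) ^ 2) * √(1 - ((1 / 2 : ℝ) ^ q) ^ 2) :=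
        five_quarters_mul_half_pow_le hpq
    _ ≤ _ := by exact_mod_cast one_sub_le_norm_sub_ofReal hμ (by positivity)

theorem CoeffRecursion.eq_zero_of_ne (hc : CoeffRecursion α β μ c) (hμ : ‖μ‖ = 1)
    (hβ : ∀ n, 1 ≤ n → β n = (1 / 2) ^ n) (hα : ∀ n, 1 ≤ n → α n = √(1 - β n ^ 2))
    (hB : ∀ m n, ‖c m n‖ ≤ B) {m n : ℕ} (hmn : m ≠ n) : c m n = 0 :=
  eq_zero_of_norm_le_of_mul_norm_le_norm_succ (f := fun j => c (m + j) (n + j)) (by norm_num)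
    (fun j => hB _ _) fun j => hc.mul_norm_le_norm_succ hβ <|
      five_quarters_mul_le_norm_sub hμ hβ hα (by omega) (by omega) (by omega)

theorem ofReal_mul_self_eq_one_sub_sq (hβ : ∀ n, 1 ≤ n → β n = (1 / 2) ^ n)
    (hα : ∀ n, 1 ≤ n → α n = √(1 - β n ^ 2)) {p : ℕ} (hp : 1 ≤ p) :
    (α p : 𝕜) * α p = 1 - (β p : 𝕜) ^ 2 := by
  have hβp : β p ^ 2 ≤ 1 := hβ p hp ▸ half_pow_sq_le_one p
  rw [← RCLike.ofReal_mul, hα p hp, Real.mul_self_sqrt (by linarith)]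
  push_cast
  rfl

theorem CoeffRecursion.norm_le_norm_succ_diag (hc : CoeffRecursion α β μ c) (hμ : ‖μ‖ = 1)
    (hβ : ∀ n, 1 ≤ n → β n = (1 / 2) ^ n) (hα : ∀ n, 1 ≤ n → α n = √(1 - β n ^ 2)) (m : ℕ) :
    ‖c m m‖ ≤ ‖c (m + 1) (m + 1)‖ := by
  have hβp : β (m + 1) ^ 2 ≤ 1 := hβ (m + 1) (by omega) ▸ half_pow_sq_le_one (m + 1)
  have hbound : 1 * (β (m + 1) * β (m + 1)) ≤ ‖μ - α (m + 1) * α (m + 1)‖ := by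
    have := one_sub_le_norm_sub_ofReal hμ (t := 1 - β (m + 1) ^ 2) (by linarith)
    rw [ofReal_mul_self_eq_one_sub_sq hβ hα (by omega)]
    push_cast at this
    linarith
  simpa using hc.mul_norm_le_norm_succ hβ hbound

theorem CoeffRecursion.exists_two_mul_norm_le_norm_succ_diag (hc : CoeffRecursion α β μ c)
    (hμ1 : μ ≠ 1) (hβ : ∀ n, 1 ≤ n → β n = (1 / 2) ^ n)
    (hα : ∀ n, 1 ≤ n → α n = √(1 - β n ^ 2)) :
    ∃ N, ∀ m ≥ N, 2 * ‖c m m‖ ≤ ‖c (m + 1) (m + 1)‖ := by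
  have hμ1' : 0 < ‖μ - 1‖ / 3 := by
    have := norm_pos_iff.2 (sub_ne_zero.2 hμ1)
    positivity
  obtain ⟨N, hN⟩ := exists_pow_lt_of_lt_one hμ1' (by norm_num : (1 / 2 : ℝ) < 1)
  refine ⟨N, fun m hm => hc.mul_norm_le_norm_succ hβ ?_⟩
  rw [ofReal_mul_self_eq_one_sub_sq hβ hα (by omega), hβ (m + 1) (by omega)]
  set u : ℝ := (1 / 2) ^ (m + 1)
  have hu : u ^ 2 ≤ (1 / 2) ^ N :=
    calc u ^ 2 ≤ u := pow_le_of_le_one (by positivity) (pow_le_one₀ (by norm_num) (by norm_num))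
          two_ne_zero
      _ ≤ (1 / 2) ^ N := pow_le_pow_of_le_one (by norm_num) (by norm_num) (by omega)
  have htri := norm_sub_le (μ - (1 - (u : 𝕜) ^ 2)) ((u : 𝕜) ^ 2)
  rw [show μ - (1 - (u : 𝕜) ^ 2) - (u : 𝕜) ^ 2 = μ - 1 by ring, norm_pow, RCLike.norm_ofReal,
    abs_of_nonneg (by positivity)] at htri
  nlinarith

theorem CoeffRecursion.eq_zero_diag (hc : CoeffRecursion α β μ c) (hμ : ‖μ‖ = 1) (hμ1 : μ ≠ 1)
    (hβ : ∀ n, 1 ≤ n → β n = (1 / 2) ^ n) (hα : ∀ n, 1 ≤ n → α n = √(1 - β n ^ 2))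
    (hB : ∀ m n, ‖c m n‖ ≤ B) (m : ℕ) : c m m = 0 := by
  obtain ⟨N, hN⟩ := hc.exists_two_mul_norm_le_norm_succ_diag hμ1 hβ hα
  have htail : c (m + N) (m + N) = 0 :=
    eq_zero_of_norm_le_of_mul_norm_le_norm_succ (f := fun j => c (m + N + j) (m + N + j))
      one_lt_two (fun j => hB _ _) (fun j => hN _ (by omega))
  have hmono : Monotone fun k => ‖c k k‖ :=
    monotone_nat_of_le_succ (hc.norm_le_norm_succ_diag hμ hβ hα)
  simpa [htail] using hmono (Nat.le_add_right m N)

theorem CoeffRecursion.diag_eq (hc : CoeffRecursion α β (1 : 𝕜) c)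
    (hβ : ∀ n, 1 ≤ n → β n = (1 / 2) ^ n) (hα : ∀ n, 1 ≤ n → α n = √(1 - β n ^ 2)) (m : ℕ) :
    c m m = c 0 0 := by
  induction m with
  | zero => rfl
  | succ m ih =>
    have hβ_ne : (β (m + 1) : 𝕜) ≠ 0 := by
      rw [hβ _ (by omega)]
      norm_num
    have hrec := hc m m
    rw [ofReal_mul_self_eq_one_sub_sq hβ hα (by omega), sub_sub_cancel, sq] at hrec
    rw [mul_left_cancel₀ (mul_ne_zero hβ_ne hβ_ne) hrec, ih]

end CoeffRecursion

namespace HilbertBasis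

section

variable {ι 𝕜 E : Type*} [RCLike 𝕜] [NormedAddCommGroup E] [InnerProductSpace 𝕜 E]
  (v : HilbertBasis ι 𝕜 E)

theorem ext_inner_left {x y : E} (h : ∀ i, ⟪v i, x⟫_𝕜 = ⟪v i, y⟫_𝕜) : x = y :=
  v.repr.injective <| lp.ext <| funext fun i => by simp only [v.repr_apply_apply, h]

theorem ext_continuousLinearMap {F : Type*} [NormedAddCommGroup F] [NormedSpace 𝕜 F]
    {x y : E →L[𝕜] F} (h : ∀ i, x (v i) = y (v i)) : x = y :=
  ext_on (Submodule.dense_iff_topologicalClosure_eq_top.2 v.dense_span) (by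
    rintro _ ⟨i, rfl⟩
    exact h i)

theorem ext_inner_apply {x y : E →L[𝕜] E}
    (h : ∀ m n, ⟪v m, x (v n)⟫_𝕜 = ⟪v m, y (v n)⟫_𝕜) : x = y :=
  v.ext_continuousLinearMap fun n => v.ext_inner_left fun m => h m n

theorem norm_inner_apply_le (x : E →L[𝕜] E) (m n : ι) : ‖⟪v m, x (v n)⟫_𝕜‖ ≤ ‖x‖ :=
  calc ‖⟪v m, x (v n)⟫_𝕜‖ ≤ ‖v m‖ * ‖x (v n)‖ := norm_inner_le_norm _ _
    _ ≤ ‖v m‖ * (‖x‖ * ‖v n‖) := by gcongr; exact x.le_opNorm _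
    _ = ‖x‖ := by rw [v.orthonormal.1 m, v.orthonormal.1 n, one_mul, mul_one]

variable [CompleteSpace E]

theorem adjoint_apply_of_apply_eq_smul {σ : ι → ι} (hσ : σ.Injective) {c : ι → 𝕜}
    {s : E →L[𝕜] E} (hs : ∀ i, s (v i) = c i • v (σ i)) (i : ι) :
    adjoint s (v (σ i)) = conj (c i) • v i := by
  classical
  refine v.ext_inner_left fun k => ?_
  rw [adjoint_inner_right, hs, inner_smul_left, inner_smul_right,
    orthonormal_iff_ite.1 v.orthonormal, orthonormal_iff_ite.1 v.orthonormal, hσ.eq_iff]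
  split_ifs with hki
  · rw [hki]
  · simp

theorem inner_apply_of_apply_eq_ofReal_smul {α : ι → ℝ} {a : E →L[𝕜] E}
    (ha : ∀ i, a (v i) = (α i : 𝕜) • v i) (i : ι) (w : E) :
    ⟪v i, a w⟫_𝕜 = α i * ⟪v i, w⟫_𝕜 := by
  have ha_adj : adjoint a (v i) = conj (α i : 𝕜) • v i :=
    v.adjoint_apply_of_apply_eq_smul Function.injective_id ha i
  rw [← adjoint_inner_left, ha_adj, inner_smul_left, RCLike.conj_conj]

end

section

variable {𝕜 E : Type*} [RCLike 𝕜] [NormedAddCommGroup E] [InnerProductSpace 𝕜 E]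
  [CompleteSpace E] (v : HilbertBasis ℕ 𝕜 E)

theorem coeffRecursion_of_transition_eq_smul {α β : ℕ → ℝ}
    {s a b x : E →L[𝕜] E} {μ : 𝕜} (hs : ∀ n, s (v n) = v (n + 1))
    (ha : ∀ n, a (v n) = (α n : 𝕜) • v n) (hb : ∀ n, b (v n) = (β n : 𝕜) • v n)
    (hx : (adjoint s ∘L a ∘L s) ∘L x ∘L (adjoint s ∘L a ∘L s)
        + (adjoint s ∘L b) ∘L x ∘L (b ∘L s) = μ • x) :
    CoeffRecursion α β μ fun m n => ⟪v m, x (v n)⟫_𝕜 := by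
  intro m n
  have hs_adj (n : ℕ) : adjoint s (v (n + 1)) = v n := by
    simpa using
      v.adjoint_apply_of_apply_eq_smul (add_left_injective 1) (c := 1) (by simpa using hs) n
  have inner_adjoint_s (k : ℕ) (w : E) : ⟪v k, adjoint s w⟫_𝕜 = ⟪v (k + 1), w⟫_𝕜 := by
    rw [adjoint_inner_right, hs]
  have inner_s (k : ℕ) (w : E) : ⟪v (k + 1), s w⟫_𝕜 = ⟪v k, w⟫_𝕜 := by
    rw [← adjoint_inner_left, hs_adj]
  have hcoeff := congrArg (fun T => ⟪v m, T (v n)⟫_𝕜) hx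
  simp only [add_apply, comp_apply, smul_apply, hs, ha, hb, hs_adj, map_smul, inner_add_right,
    inner_smul_right, inner_adjoint_s, inner_s, v.inner_apply_of_apply_eq_ofReal_smul ha,
    v.inner_apply_of_apply_eq_ofReal_smul hb] at hcoeff
  linear_combination hcoeff

end

end HilbertBasis

theorem e_eq_default : e = ⇑(default : HilbertBasis ℕ ℂ H) := by
  funext n
  rw [← HilbertBasis.repr_symm_single]
  rfl

theorem psi_plus_weakly_mixing_special_general (α β : ℕ → ℝ)
    (hβn : ∀ n, 1 ≤ n → β n = (1 / 2) ^ n)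
    (hαn : ∀ n, 1 ≤ n → α n = Real.sqrt (1 - β n ^ 2))
    (s a b : H →L[ℂ] H)
    (hs : ∀ n, s (e n) = e (n + 1))
    (ha : ∀ n, a (e n) = (α n : ℂ) • e n)
    (hb : ∀ n, b (e n) = (β n : ℂ) • e n)
    (μ : ℂ) (hμ : ‖μ‖ = 1) (x : H →L[ℂ] H)
    (hx : (adjoint s ∘L a ∘L s) ∘L x ∘L (adjoint s ∘L a ∘L s)
        + (adjoint s ∘L b) ∘L x ∘L (b ∘L s) = μ • x) :
    (μ ≠ 1 → x = 0) ∧ (μ = 1 → ∃ c : ℂ, x = c • 1) := by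
  rw [e_eq_default] at hs ha hb
  set v : HilbertBasis ℕ ℂ H := default
  have hc := v.coeffRecursion_of_transition_eq_smul hs ha hb hx
  have hB := v.norm_inner_apply_le x
  constructor
  · intro hμ1
    refine v.ext_inner_apply fun m n => ?_
    rcases eq_or_ne m n with rfl | hmn
    · simpa using hc.eq_zero_diag hμ hμ1 hβn hαn hB m
    · simpa using hc.eq_zero_of_ne hμ hβn hαn hB hmn
  · rintro rfl
    refine ⟨⟪v 0, x (v 0)⟫_ℂ, v.ext_inner_apply fun m n => ?_⟩
    rcases eq_or_ne m n with rfl | hmn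
    · simpa [inner_smul_right, v.orthonormal.1 m] using hc.diag_eq hβn hαn m
    · simpa [inner_smul_right, orthonormal_iff_ite.1 v.orthonormal, hmn] using
        hc.eq_zero_of_ne hμ hβn hαn hB hmn

/-- for βₙ = (1/2)ⁿ, αₙ = √(1 − βₙ²) (n ≥ 1), α₀ = 1, β₀ = 0, the
transition operator T_{ψ₊}(x) = s*as x s*as + s*b x bs is weakly mixing: the only
bounded solutions of T_{ψ₊}(x) = μ x with |μ| = 1 are x = 0 if μ ≠ 1 and x ∈ ℂ·1 if
μ = 1. -/
theorem psi_plus_weakly_mixing_special (α β : ℕ → ℝ)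
    (hα0 : α 0 = 1) (hβ0 : β 0 = 0)
    (hβn : ∀ n, 1 ≤ n → β n = (1 / 2) ^ n)
    (hαn : ∀ n, 1 ≤ n → α n = Real.sqrt (1 - β n ^ 2))
    (s a b : H →L[ℂ] H)
    (hs : ∀ n, s (e n) = e (n + 1))
    (ha : ∀ n, a (e n) = (α n : ℂ) • e n)
    (hb : ∀ n, b (e n) = (β n : ℂ) • e n)
    (μ : ℂ) (hμ : ‖μ‖ = 1) (x : H →L[ℂ] H)
    (hx : (adjoint s ∘L a ∘L s) ∘L x ∘L (adjoint s ∘L a ∘L s)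
        + (adjoint s ∘L b) ∘L x ∘L (b ∘L s) = μ • x) :
    (μ ≠ 1 → x = 0) ∧ (μ = 1 → ∃ c : ℂ, x = c • 1) :=
  psi_plus_weakly_mixing_special_general α β hβn hαn s a b hs ha hb μ hμ x hx
end
end
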